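/- For weakly increasing ī ∈ 𝓦_m and τ ∈ D_{j̄}, σ ∈ D_ī, the matrix tensor e_{τ(j̄)τ(ī)} applied to σ(v(ī)) equals τ(v(j̄)) if τ and σ lie in the same left coset of H_ī, and equals 0 otherwise. -/

import Mathlib

/-- number of inversions of a permutation of Fin m -/
def invNum {m : ℕ} (σ : Equiv.Perm (Fin m)) : ℕ :=
  (Finset.univ.filter (fun p : Fin m × Fin m => p.1 < p.2 ∧ σ p.2 < σ p.1)).card

/-- D_ī ⊂ S_m: minimal-inversion left coset representatives of the stabilizer H_ī -/
def Dset {N m : ℕ} (i : Fin m → Fin (N + 1)) : Finset (Equiv.Perm (Fin m)) :=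
  Finset.univ.filter fun σ =>
    ∀ ρ : Equiv.Perm (Fin m),
      (∃ ξ : Equiv.Perm (Fin m), (∀ l, i (ξ l) = i l) ∧ ρ = σ * ξ) →
      invNum σ ≤ invNum ρ

/-- basis tensor I_{i_1} ⊗ ⋯ ⊗ I_{i_m}, as a delta function on basis indices -/
noncomputable def deltaT {N m : ℕ} (i : Fin m → Fin (N + 1)) :
    (Fin m → Fin (N + 1)) → ℂ :=
  fun x => if x = i then 1 else 0

/-- the matrix-unit tensor e_{a_1 b_1} ⊗ ⋯ ⊗ e_{a_m b_m} -/
noncomputable def eMat {N m : ℕ} (a b : Fin m → Fin (N + 1)) :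
    ((Fin m → Fin (N + 1)) → ℂ) → ((Fin m → Fin (N + 1)) → ℂ) :=
  fun f y => if y = a then f b else 0

/-! The matrix unit `e_{ab}` sends the basis tensor `v(c)` to `v(a)` if `c = b` and to `0`
otherwise, and `σ(v(ī)) = τ(v(ī))` holds exactly when `σ⁻¹τ` stabilizes `ī`. -/

theorem eMat_deltaT {N m : ℕ} (a b c : Fin m → Fin (N + 1)) :
    eMat a b (deltaT c) = if c = b then deltaT a else 0 := by
  funext y
  split_ifs with hc
  · simp [eMat, deltaT, hc]
  · simp [eMat, deltaT, Ne.symm hc]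

theorem Equiv.Perm.comp_inv_eq_comp_inv_iff {α β : Type*} (f : α → β) (τ σ : Equiv.Perm α) :
    f ∘ ⇑σ⁻¹ = f ∘ ⇑τ⁻¹ ↔ ∃ ξ : Equiv.Perm α, (∀ l, f (ξ l) = f l) ∧ τ = σ * ξ := by
  constructor
  · intro h
    refine ⟨σ⁻¹ * τ, fun l => ?_, by group⟩
    simpa using congrFun h (τ l)
  · rintro ⟨ξ, hξ, rfl⟩
    funext x
    simpa using hξ (ξ⁻¹ (σ⁻¹ x))

theorem stmt_17_general (N m : ℕ) (i j : Fin m → Fin (N + 1)) (τ σ : Equiv.Perm (Fin m)) :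
    ((∃ ξ : Equiv.Perm (Fin m), (∀ l, i (ξ l) = i l) ∧ τ = σ * ξ) →
      eMat (j ∘ ⇑τ⁻¹) (i ∘ ⇑τ⁻¹) (deltaT (i ∘ ⇑σ⁻¹)) = deltaT (j ∘ ⇑τ⁻¹)) ∧
    (¬ (∃ ξ : Equiv.Perm (Fin m), (∀ l, i (ξ l) = i l) ∧ τ = σ * ξ) →
      eMat (j ∘ ⇑τ⁻¹) (i ∘ ⇑τ⁻¹) (deltaT (i ∘ ⇑σ⁻¹)) = 0) := by
  rw [eMat_deltaT, ← Equiv.Perm.comp_inv_eq_comp_inv_iff]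
  exact ⟨fun h => if_pos h, fun h => if_neg h⟩

/-- for τ ∈ D_{j̄} and σ ∈ D_ī, the tensor e_{τ(j̄)τ(ī)} maps σ(v(ī))
to τ(v(j̄)) if τ and σ lie in the same left coset of H_ī, and to 0 otherwise. -/
theorem stmt_17 (N m : ℕ) (i j : Fin m → Fin (N + 1)) (hi : Monotone i)
    (hj : Monotone j) (τ σ : Equiv.Perm (Fin m))
    (hτ : τ ∈ Dset j) (hσ : σ ∈ Dset i) :
    ((∃ ξ : Equiv.Perm (Fin m), (∀ l, i (ξ l) = i l) ∧ τ = σ * ξ) →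
      eMat (j ∘ ⇑τ⁻¹) (i ∘ ⇑τ⁻¹) (deltaT (i ∘ ⇑σ⁻¹)) = deltaT (j ∘ ⇑τ⁻¹)) ∧
    (¬ (∃ ξ : Equiv.Perm (Fin m), (∀ l, i (ξ l) = i l) ∧ τ = σ * ξ) →
      eMat (j ∘ ⇑τ⁻¹) (i ∘ ⇑τ⁻¹) (deltaT (i ∘ ⇑σ⁻¹)) = 0) :=
  stmt_17_general N m i j τ σ
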